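/- arXiv:1212.4975 — 4 statements merged into one kernel-verified Lean document; each statement's English description precedes it below -/
import Mathlib

section
/- Almost sure convergence of products of random stochastic matrices: Let X(1) be a random d × d row-stochastic matrix and {X(n)} an i.i.d. sequence with the same law. Suppose there exists m < ∞ such that P(X(m)X(m−1)⋯X(1) has all entries positive) > 0. Then there exists a random element W of the simplex S_d such that X(n)X(n−1)⋯X(1) converges almost surely, as n → ∞, to the d × d matrix all of whose rows equal W. -/
open MeasureTheory ProbabilityTheory Filter

noncomputable instance {d : ℕ} : MeasurableSpace (Matrix (Fin d) (Fin d) ℝ) :=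
  MeasurableSpace.pi

/-- The left products `X(n,1) = X(n) X(n-1) ⋯ X(1)` (with `X(0,1) := 1`). -/
def leftProd {Ω : Type*} {d : ℕ}
    (X : ℕ → Ω → Matrix (Fin d) (Fin d) ℝ) : ℕ → Ω → Matrix (Fin d) (Fin d) ℝ
  | 0 => fun _ => 1
  | n + 1 => fun ω => X (n + 1) ω * leftProd X n ω

/-
Rows of `X(n+1) ⋯ X(1)` are convex combinations of the rows of `X(n) ⋯ X(1)`, so in each
column the interval between the smallest and largest entry shrinks. Multiplying on the left by a
stochastic matrix whose entries are all at least `δ` shrinks it by the factor `1 - d δ`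
(Dobrushin). Some product `X(m) ⋯ X(1)` has entries bounded below by some `δ > 0` with positive
probability, and the disjoint blocks `X(k(m+1) + m + 1) ⋯ X(k(m+1) + 1)` are i.i.d. copies
of a product that is at least as good, so by the second Borel–Cantelli lemma infinitely many
blocks contract almost surely. Hence every column interval collapses to a point `W j`.
-/

open Finset Topology

namespace Matrix

variable {n : Type*} [Fintype n] {A B : Matrix n n ℝ}

theorem le_mul_apply_of_forall_le [DecidableEq n] (hA : A ∈ rowStochastic ℝ n) {c : ℝ} {j : n}
    (hB : ∀ k, c ≤ B k j) (i : n) : c ≤ (A * B) i j :=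
  calc c = ∑ k, A i k * c := by rw [← sum_mul, sum_row_of_mem_rowStochastic hA, one_mul]
    _ ≤ (A * B) i j := sum_le_sum fun k _ => mul_le_mul_of_nonneg_left (hB k) (hA.1 i k)

theorem mul_apply_le_of_forall_le [DecidableEq n] (hA : A ∈ rowStochastic ℝ n) {c : ℝ} {j : n}
    (hB : ∀ k, B k j ≤ c) (i : n) : (A * B) i j ≤ c :=
  calc (A * B) i j ≤ ∑ k, A i k * c :=
        sum_le_sum fun k _ => mul_le_mul_of_nonneg_left (hB k) (hA.1 i k)
    _ = c := by rw [← sum_mul, sum_row_of_mem_rowStochastic hA, one_mul]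

noncomputable def colMin (A : Matrix n n ℝ) (j : n) : ℝ := ⨅ i, A i j

noncomputable def colMax (A : Matrix n n ℝ) (j : n) : ℝ := ⨆ i, A i j

theorem colMin_le (A : Matrix n n ℝ) (i j : n) : colMin A j ≤ A i j :=
  ciInf_le (f := fun i => A i j) (Set.finite_range _).bddBelow i

theorem le_colMax (A : Matrix n n ℝ) (i j : n) : A i j ≤ colMax A j :=
  le_ciSup (f := fun i => A i j) (Set.finite_range _).bddAbove i

variable [Nonempty n]

theorem colMin_le_colMax (A : Matrix n n ℝ) (j : n) : colMin A j ≤ colMax A j :=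
  (colMin_le A (Classical.arbitrary n) j).trans (le_colMax A _ j)

variable [DecidableEq n]

theorem colMin_le_colMin_mul (hA : A ∈ rowStochastic ℝ n) (B : Matrix n n ℝ) (j : n) :
    colMin B j ≤ colMin (A * B) j :=
  le_ciInf (le_mul_apply_of_forall_le hA (colMin_le B · j))

theorem colMax_mul_le_colMax (hA : A ∈ rowStochastic ℝ n) (B : Matrix n n ℝ) (j : n) :
    colMax (A * B) j ≤ colMax B j :=
  ciSup_le (mul_apply_le_of_forall_le hA (le_colMax B · j))

/-- Dobrushin's contraction estimate. -/
theorem colMax_sub_colMin_mul_le (hA : A ∈ rowStochastic ℝ n) {δ : ℝ} (hδ : ∀ i k, δ ≤ A i k)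
    (B : Matrix n n ℝ) (j : n) :
    colMax (A * B) j - colMin (A * B) j ≤
      (1 - Fintype.card n * δ) * (colMax B j - colMin B j) := by
  obtain ⟨i, hi⟩ := exists_eq_ciSup_of_finite (f := fun i => (A * B) i j)
  obtain ⟨i', hi'⟩ := exists_eq_ciInf_of_finite (f := fun i => (A * B) i j)
  rw [colMax, colMin, ← hi, ← hi']
  have hdiff : (A * B) i j - (A * B) i' j = ∑ k, (A i k - A i' k) * (B k j - colMin B j) := by
    simp only [mul_apply, sub_mul, mul_sub, sum_sub_distrib, ← sum_mul,
      sum_row_of_mem_rowStochastic hA]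
    ring
  calc (A * B) i j - (A * B) i' j
      ≤ ∑ k, (A i k - δ) * (colMax B j - colMin B j) := by
        rw [hdiff]
        refine sum_le_sum fun k _ => ?_
        have hB₀ : 0 ≤ B k j - colMin B j := sub_nonneg.2 (colMin_le B k j)
        calc (A i k - A i' k) * (B k j - colMin B j)
            ≤ (A i k - δ) * (B k j - colMin B j) := by gcongr; exact hδ i' k
          _ ≤ (A i k - δ) * (colMax B j - colMin B j) := by
            gcongr
            · exact sub_nonneg.2 (hδ i k)
            · exact le_colMax B k j
    _ = (1 - Fintype.card n * δ) * (colMax B j - colMin B j) := by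
        rw [← sum_mul, sum_sub_distrib, sum_row_of_mem_rowStochastic hA, sum_const, card_univ,
          nsmul_eq_mul]

end Matrix

theorem tendsto_zero_of_antitone_of_frequently_le_mul {u : ℕ → ℝ} (hu : Antitone u)
    (hu₀ : ∀ n, 0 ≤ u n) {c : ℝ} (hc : c < 1) (hfreq : ∃ᶠ n in atTop, ∃ n', u n' ≤ c * u n) :
    Tendsto u atTop (𝓝 0) := by
  have hbdd : BddBelow (Set.range u) := ⟨0, Set.forall_mem_range.2 hu₀⟩
  have hlim : Tendsto u atTop (𝓝 (⨅ n, u n)) := tendsto_atTop_ciInf hu hbdd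
  have hL₀ : 0 ≤ ⨅ n, u n := le_ciInf hu₀
  have hLc : ⨅ n, u n ≤ c * ⨅ n, u n :=
    ge_of_tendsto_of_frequently (hlim.const_mul c) <| hfreq.mono fun n ⟨n', hn'⟩ =>
      (ciInf_le hbdd n').trans hn'
  rwa [show ⨅ n, u n = 0 by nlinarith] at hlim

open Matrix in
theorem exists_tendsto_rank_one_of_frequently_contracting {n : Type*} [Fintype n]
    [DecidableEq n] [Nonempty n] {P : ℕ → Matrix n n ℝ} (hP : ∀ k, P k ∈ rowStochastic ℝ n)
    (hstep : ∀ k, ∃ A ∈ rowStochastic ℝ n, P (k + 1) = A * P k) {δ : ℝ} (hδ : 0 < δ)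
    (hfreq : ∃ᶠ k in atTop, ∃ k', ∃ A ∈ rowStochastic ℝ n, (∀ i l, δ ≤ A i l) ∧ P k' = A * P k) :
    ∃ w ∈ stdSimplex ℝ n, Tendsto P atTop (𝓝 (of fun _ j => w j)) := by
  have hmin (j : n) : Monotone fun k => colMin (P k) j := monotone_nat_of_le_succ fun k => by
    obtain ⟨A, hA, hk⟩ := hstep k
    exact hk ▸ colMin_le_colMin_mul hA _ j
  have hmax (j : n) : Antitone fun k => colMax (P k) j := antitone_nat_of_succ_le fun k => by
    obtain ⟨A, hA, hk⟩ := hstep k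
    exact hk ▸ colMax_mul_le_colMax hA _ j
  have hspread (j : n) : Tendsto (fun k => colMax (P k) j - colMin (P k) j) atTop (𝓝 0) := by
    refine tendsto_zero_of_antitone_of_frequently_le_mul
      (fun a b hab => sub_le_sub (hmax j hab) (hmin j hab))
      (fun k => sub_nonneg.2 (colMin_le_colMax _ j)) (c := 1 - Fintype.card n * δ) ?_ ?_
    · exact sub_lt_self _ (by positivity)
    · exact hfreq.mono fun k ⟨k', A, hA, hδA, hk'⟩ =>
        ⟨k', hk' ▸ colMax_sub_colMin_mul_le hA hδA _ j⟩
  set w : n → ℝ := fun j => ⨆ k, colMin (P k) j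
  have hlow (j : n) : Tendsto (fun k => colMin (P k) j) atTop (𝓝 (w j)) :=
    tendsto_atTop_ciSup (hmin j) ⟨1, Set.forall_mem_range.2 fun k =>
      (colMin_le _ (Classical.arbitrary n) j).trans (le_one_of_mem_rowStochastic (hP k))⟩
  have hup (j : n) : Tendsto (fun k => colMax (P k) j) atTop (𝓝 (w j)) := by
    simpa using (hlow j).add (hspread j)
  have hentry (i j : n) : Tendsto (fun k => P k i j) atTop (𝓝 (w j)) :=
    tendsto_of_tendsto_of_tendsto_of_le_of_le (hlow j) (hup j)
      (fun k => colMin_le (P k) i j) (fun k => le_colMax (P k) i j)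
  refine ⟨w, ⟨fun j => ?_, ?_⟩, tendsto_pi_nhds.2 fun i => tendsto_pi_nhds.2 (hentry i)⟩
  · exact ge_of_tendsto' (hentry (Classical.arbitrary n) j) fun k => (hP k).1 _ j
  · refine tendsto_nhds_unique
      (tendsto_finsetSum _ fun j _ => hentry (Classical.arbitrary n) j) ?_
    simp only [sum_row_of_mem_rowStochastic (hP _), tendsto_const_nhds]

namespace ProbabilityTheory

variable {Ω β : Type*} [MeasurableSpace Ω] [MeasurableSpace β] {μ : Measure Ω}

theorem iIndepFun.curry {ι κ : Type*} {Y : ι × κ → Ω → β} (hY : ∀ p, Measurable (Y p))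
    (h : iIndepFun Y μ) : iIndepFun (fun i ω j => Y (i, j) ω) μ := by
  have := h.isProbabilityMeasure
  rw [iIndepFun_iff_map_fun_eq_infinitePi_map (fun i => measurable_pi_lambda _ fun j => hY _)]
  have hcurry : (fun ω i j => Y (i, j) ω) = MeasurableEquiv.curry ι κ β ∘ fun ω p => Y p ω := rfl
  have _ (p : ι × κ) : IsProbabilityMeasure (μ.map (Y p)) :=
    Measure.isProbabilityMeasure_map (hY p).aemeasurable
  rw [hcurry, ← Measure.map_map (MeasurableEquiv.measurable _) (measurable_pi_lambda _ hY),
    h.map_fun_eq_infinitePi_map hY, Measure.infinitePi_map_curry fun i j => μ.map (Y (i, j))]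
  congr 1 with i : 1
  exact ((h.precomp (Prod.mk_right_injective i)).map_fun_eq_infinitePi_map fun j => hY _).symm

theorem iIndepFun.map_precomp_eq_pi {ι κ : Type*} [Fintype κ] {Y : ι → Ω → β}
    (hY : ∀ i, Measurable (Y i)) (h : iIndepFun Y μ) {i₀ : ι}
    (hident : ∀ i, μ.map (Y i) = μ.map (Y i₀)) {f : κ → ι} (hf : f.Injective) :
    μ.map (fun ω t => Y (f t) ω) = Measure.pi fun _ => μ.map (Y i₀) := by
  rw [(h.precomp hf).map_fun_eq_pi_map fun t => (hY _).aemeasurable]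
  simp only [hident]

theorem ae_frequently_mem_of_iIndepSet {s : ℕ → Set Ω} (hs : ∀ n, MeasurableSet (s n))
    (h : iIndepSet s μ) (hident : ∀ n, μ (s n) = μ (s 0)) (hpos : 0 < μ (s 0)) :
    ∀ᵐ ω ∂μ, ∃ᶠ n in atTop, ω ∈ s n := by
  have := h.isProbabilityMeasure
  have hlimsup : μ (limsup s atTop) = 1 := measure_limsup_eq_one hs h <| by
    rw [tsum_congr hident]
    exact ENNReal.tsum_const_eq_top_of_ne_zero hpos.ne'
  have hae : ∀ᵐ ω ∂μ, ω ∈ limsup s atTop :=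
    (ae_mem_iff_measure_eq (MeasurableSet.measurableSet_limsup hs).nullMeasurableSet).2 <| by
      rw [hlimsup, measure_univ]
  exact hae.mono fun ω hω => mem_limsup_iff_frequently_mem.1 hω

theorem ae_frequently_block_mem {Y : ℕ → Ω → β} (hY : ∀ n, Measurable (Y n))
    (h : iIndepFun Y μ) (hident : ∀ n, μ.map (Y n) = μ.map (Y 0)) {m : ℕ} {G : Set (Fin m → β)}
    (hG : MeasurableSet G) (hpos : 0 < μ ((fun ω (t : Fin m) => Y (t + 1) ω) ⁻¹' G)) :
    ∀ᵐ ω ∂μ, ∃ᶠ k in atTop, (fun t : Fin m => Y (k * m + t + 1) ω) ∈ G := by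
  have hinj (k : ℕ) : (fun t : Fin m => k * m + t + 1).Injective := fun t t' htt' =>
    Fin.ext (by simpa using htt')
  have hpairs : (fun p : ℕ × Fin m => p.1 * m + p.2 + 1).Injective := by
    rintro ⟨k, t⟩ ⟨k', t'⟩ h
    have : NeZero m := ⟨t.pos.ne'⟩
    exact (Nat.divModEquiv m).symm.injective (Nat.succ_injective h)
  have hblocks : iIndepFun (fun k ω (t : Fin m) => Y (k * m + t + 1) ω) μ :=
    (h.precomp hpairs).curry fun _ => hY _
  have hmeas (k : ℕ) : Measurable fun ω (t : Fin m) => Y (k * m + t + 1) ω :=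
    measurable_pi_lambda _ fun _ => hY _
  refine ae_frequently_mem_of_iIndepSet
    (s := fun k => (fun ω (t : Fin m) => Y (k * m + t + 1) ω) ⁻¹' G)
    (fun k => hmeas k hG) ?_ (fun k => ?_) (by simpa using hpos)
  · rw [iIndepSet_iff_meas_biInter fun k => hmeas k hG]
    exact fun S => hblocks.measure_inter_preimage_eq_mul S fun _ _ => hG
  · rw [← Measure.map_apply (hmeas k) hG, ← Measure.map_apply (hmeas 0) hG,
      h.map_precomp_eq_pi hY hident (hinj k), h.map_precomp_eq_pi hY hident (hinj 0)]

end ProbabilityTheory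

theorem MeasureTheory.exists_pos_measure_forall_le {Ω ι : Type*} [MeasurableSpace Ω]
    {μ : Measure Ω} [Finite ι] {f : ι → Ω → ℝ} (h : 0 < μ {ω | ∀ i, 0 < f i ω}) :
    ∃ δ > 0, 0 < μ {ω | ∀ i, δ ≤ f i ω} := by
  have hcover : {ω | ∀ i, 0 < f i ω} ⊆ ⋃ N : ℕ, {ω | ∀ i, 1 / ((N : ℝ) + 1) ≤ f i ω} :=
    fun ω hω => Set.mem_iUnion.2 <| (eventually_all.2 fun i =>
      (tendsto_one_div_add_atTop_nhds_zero_nat.eventually (eventually_lt_nhds (hω i))).mono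
        fun _ => le_of_lt).exists
  by_contra! hnull
  exact h.ne' <| measure_mono_null hcover <| measure_iUnion_null fun N =>
    nonpos_iff_eq_zero.1 (hnull _ (by positivity))

section BlockProducts

variable {d : ℕ}

theorem Measurable.matrix_mul {α : Type*} [MeasurableSpace α]
    {f g : α → Matrix (Fin d) (Fin d) ℝ} (hf : Measurable f) (hg : Measurable g) :
    Measurable fun x => f x * g x := by
  refine measurable_pi_lambda _ fun i => measurable_pi_lambda _ fun j => ?_
  simp only [Matrix.mul_apply]
  exact Finset.measurable_sum _ fun k _ => hf.eval.eval.mul hg.eval.eval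

def blockProd : (m : ℕ) → (Fin m → Matrix (Fin d) (Fin d) ℝ) → Matrix (Fin d) (Fin d) ℝ
  | 0, _ => 1
  | m + 1, v => v (Fin.last m) * blockProd m (Fin.init v)

theorem measurable_blockProd (m : ℕ) : Measurable (blockProd (d := d) m) := by
  induction m with
  | zero => exact measurable_const
  | succ m ih =>
    exact (measurable_pi_apply _).matrix_mul
      (ih.comp (measurable_pi_lambda _ fun _ => measurable_pi_apply _))

theorem leftProd_add {Ω : Type*} (X : ℕ → Ω → Matrix (Fin d) (Fin d) ℝ) (k m : ℕ) (ω : Ω) :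
    leftProd X (k + m) ω = blockProd m (fun t => X (k + t + 1) ω) * leftProd X k ω := by
  induction m with
  | zero => simp [blockProd]
  | succ m ih =>
    show X (k + m + 1) ω * leftProd X (k + m) ω = _
    rw [ih, blockProd, mul_assoc]
    rfl

theorem leftProd_eq_blockProd {Ω : Type*} (X : ℕ → Ω → Matrix (Fin d) (Fin d) ℝ) (n : ℕ)
    (ω : Ω) : leftProd X n ω = blockProd n (fun t => X (t + 1) ω) := by
  simpa [leftProd] using leftProd_add X 0 n ω

theorem blockProd_mem_rowStochastic {m : ℕ} {v : Fin m → Matrix (Fin d) (Fin d) ℝ}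
    (hv : ∀ t, v t ∈ Matrix.rowStochastic ℝ (Fin d)) :
    blockProd m v ∈ Matrix.rowStochastic ℝ (Fin d) := by
  induction m with
  | zero => exact Submonoid.one_mem _
  | succ m ih => exact Submonoid.mul_mem _ (hv _) (ih fun t => hv _)

end BlockProducts

/-- A.s. convergence of left products of i.i.d. random stochastic matrices to
a matrix with identical rows, given that some finite left product is
entrywise positive with positive probability. -/
theorem leftProd_tendsto_rank_one
    {Ω : Type*} [MeasureSpace Ω] [IsProbabilityMeasure (ℙ : Measure Ω)]
    {d : ℕ} (hd : 0 < d)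
    (X : ℕ → Ω → Matrix (Fin d) (Fin d) ℝ)
    (hmeas : ∀ n, Measurable (X n))
    (hiid : iIndepFun X ℙ)
    (hident : ∀ n, Measure.map (X n) ℙ = Measure.map (X 0) ℙ)
    (hstoch : ∀ n ω, (∀ i j, 0 ≤ X n ω i j) ∧ ∀ i, ∑ j, X n ω i j = 1)
    (hpos : ∃ m, 0 < ℙ {ω | ∀ i j, 0 < leftProd X m ω i j}) :
    ∃ W : Ω → Fin d → ℝ,
      (∀ᵐ ω ∂ℙ, W ω ∈ stdSimplex ℝ (Fin d)) ∧
      ∀ᵐ ω ∂ℙ, Tendsto (fun n => leftProd X n ω) atTop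
        (nhds (Matrix.of fun _ j => W ω j)) := by
  have : Nonempty (Fin d) := Fin.pos_iff_nonempty.1 hd
  have hX (n : ℕ) (ω : Ω) : X n ω ∈ Matrix.rowStochastic ℝ (Fin d) :=
    Matrix.mem_rowStochastic_iff_sum.2 (hstoch n ω)
  obtain ⟨m, hm⟩ := hpos
  obtain ⟨δ, hδ, hmδ⟩ := exists_pos_measure_forall_le
    (f := fun p : Fin d × Fin d => fun ω => leftProd X m ω p.1 p.2) (by simpa only [Prod.forall])
  -- blocks of length `m + 1` rather than `m`, which may be `0`, so that their positions move off
  -- to infinity; a stochastic factor in front keeps the entries above `δ`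
  set G := {v : Fin (m + 1) → Matrix (Fin d) (Fin d) ℝ | ∀ i j, δ ≤ blockProd (m + 1) v i j}
  have hG : MeasurableSet G := by
    simp only [G, Set.ofPred_forall]
    exact .iInter fun i => .iInter fun j =>
      measurableSet_le measurable_const ((measurable_blockProd _).eval.eval)
  have hG₀ : 0 < ℙ ((fun ω (t : Fin (m + 1)) => X (t + 1) ω) ⁻¹' G) := by
    refine hmδ.trans_le (measure_mono fun ω hω i j => ?_)
    rw [← leftProd_eq_blockProd]
    exact Matrix.le_mul_apply_of_forall_le (hX (m + 1) ω) (fun k => hω (k, j)) i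
  have hconv : ∀ᵐ ω ∂ℙ, ∃ w ∈ stdSimplex ℝ (Fin d),
      Tendsto (fun n => leftProd X n ω) atTop (𝓝 (Matrix.of fun _ j => w j)) := by
    filter_upwards [ae_frequently_block_mem hmeas hiid hident hG hG₀] with ω hω
    refine exists_tendsto_rank_one_of_frequently_contracting
      (fun n => leftProd_eq_blockProd X n ω ▸ blockProd_mem_rowStochastic fun t => hX _ ω)
      (fun k => ⟨_, hX (k + 1) ω, rfl⟩) hδ ?_
    have hpositions : Tendsto (· * (m + 1)) atTop atTop :=
      tendsto_atTop_mono (fun k => Nat.le_mul_of_pos_right k m.succ_pos) tendsto_id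
    exact hpositions.frequently <| hω.mono fun k hk =>
      ⟨_, _, blockProd_mem_rowStochastic fun t => hX _ ω, hk, leftProd_add X _ _ ω⟩
  exact ⟨fun ω => Classical.epsilon fun w => w ∈ stdSimplex ℝ (Fin d) ∧
      Tendsto (fun n => leftProd X n ω) atTop (𝓝 (Matrix.of fun _ j => w j)),
    hconv.mono fun ω h => (Classical.epsilon_spec h).1,
    hconv.mono fun ω h => (Classical.epsilon_spec h).2⟩
end

section
/- Fixed-point characterization of the limit: Under the assumptions of the preceding convergence result (i.i.d. row-stochastic X(n) with some finite m-fold product positive with positive probability, and W the common row of the almost-sure limit of the left products), if Y is a random element of the simplex S_d independent of X(1), then Y·X(1) has the same distribution as Y if and only if Y has the same distribution as W. -/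
/-!
Write `ν` for the law of `X(1)` and `μ ⋆ κ` for the law of `y ᵥ* A` with `y ∼ μ`, `A ∼ κ`
independent. Since `X(n+1,1) = X(n+1,2) X(1)` with `X(n+1,2)` independent of `X(1)` and
distributed as `X(n,1)`, the law of `X(n+1,1)` is that of `X(n,1)` convolved with `ν`, so
`(μ ⋆ law X(n,1)) ⋆ ν = μ ⋆ law X(n+1,1)`. For `y` in the simplex, `y ᵥ* X(n,1) → W` a.s.,
because every row of the limit matrix is `W`; hence `μ ⋆ law X(n,1)` is realised by random
vectors converging a.s. to `W` whenever `μ` lives on the simplex. If `μ ⋆ ν = μ`, then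
`μ ⋆ law X(n,1) = μ` for all `n`, and in the limit `μ = law W`. Conversely, starting from
`μ = law W`, letting `n → ∞` on both sides of the identity above gives `law W ⋆ ν = law W`.
-/

open MeasureTheory ProbabilityTheory Filter

open Matrix Topology

instance {d : ℕ} : BorelSpace (Matrix (Fin d) (Fin d) ℝ) :=
  inferInstanceAs (BorelSpace (Fin d → Fin d → ℝ))

instance {d : ℕ} : SecondCountableTopology (Matrix (Fin d) (Fin d) ℝ) :=
  inferInstanceAs (SecondCountableTopology (Fin d → Fin d → ℝ))

theorem map_eq_map_of_ae_tendsto {α β E : Type*} [MeasurableSpace α] [MeasurableSpace β]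
    [TopologicalSpace E] [MeasurableSpace E] [BorelSpace E] [HasOuterApproxClosed E]
    {μ : Measure α} {ν : Measure β} [IsProbabilityMeasure μ] [IsProbabilityMeasure ν]
    {f : ℕ → α → E} {g : ℕ → β → E} {F : α → E} {G : β → E}
    (hf : ∀ n, AEMeasurable (f n) μ) (hg : ∀ n, AEMeasurable (g n) ν)
    (hF : AEMeasurable F μ) (hG : AEMeasurable G ν)
    (hfF : ∀ᵐ x ∂μ, Tendsto (fun n => f n x) atTop (𝓝 (F x)))
    (hgG : ∀ᵐ x ∂ν, Tendsto (fun n => g n x) atTop (𝓝 (G x)))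
    (hfg : ∀ n, μ.map (f n) = ν.map (g n)) :
    μ.map F = ν.map G := by
  have h₁ := (tendstoInDistribution_of_ae_tendsto hf hF hfF).tendsto
  have h₂ := (tendstoInDistribution_of_ae_tendsto hg hG hgG).tendsto
  have h₁' := h₁.congr (f₂ := fun n =>
    (⟨ν.map (g n), Measure.isProbabilityMeasure_map (hg n)⟩ : ProbabilityMeasure E))
    fun n => Subtype.ext (hfg n)
  exact congrArg ProbabilityMeasure.toMeasure (tendsto_nhds_unique h₁' h₂)

theorem map_comp_snd_prod {α β γ : Type*} [MeasurableSpace α] [MeasurableSpace β]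
    [MeasurableSpace γ] (μ : Measure α) [IsProbabilityMeasure μ] {ν : Measure β} [SFinite ν]
    {f : β → γ} (hf : Measurable f) :
    (μ.prod ν).map (fun p => f p.2) = ν.map f := by
  change (μ.prod ν).map (f ∘ Prod.snd) = _
  rw [← Measure.map_map hf measurable_snd, Measure.map_snd_prod, measure_univ, one_smul]

section VecMulConv

variable {d : ℕ}

noncomputable def vecMulConv (μ : Measure (Fin d → ℝ)) (κ : Measure (Matrix (Fin d) (Fin d) ℝ)) :
    Measure (Fin d → ℝ) :=
  (μ.prod κ).map fun p => p.1 ᵥ* p.2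

theorem measurable_vecMul :
    Measurable fun p : (Fin d → ℝ) × Matrix (Fin d) (Fin d) ℝ => p.1 ᵥ* p.2 :=
  (continuous_fst.matrix_vecMul continuous_snd).measurable

theorem map_prod_vecMul {α β : Type*} [MeasurableSpace α] [MeasurableSpace β]
    {ρ₁ : Measure α} {ρ₂ : Measure β} [SFinite ρ₁] [SFinite ρ₂]
    {f : α → Fin d → ℝ} {g : β → Matrix (Fin d) (Fin d) ℝ} (hf : Measurable f)
    (hg : Measurable g) :
    (ρ₁.prod ρ₂).map (fun p => f p.1 ᵥ* g p.2) = vecMulConv (ρ₁.map f) (ρ₂.map g) := by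
  rw [vecMulConv, Measure.map_prod_map _ _ hf hg,
    Measure.map_map measurable_vecMul (hf.prodMap hg)]
  rfl

theorem ProbabilityTheory.IndepFun.map_vecMul_eq_vecMulConv {Ω : Type*} [MeasurableSpace Ω]
    {P : Measure Ω} [IsFiniteMeasure P] {Y : Ω → Fin d → ℝ} {A : Ω → Matrix (Fin d) (Fin d) ℝ}
    (hY : Measurable Y) (hA : Measurable A) (hYA : IndepFun Y A P) :
    P.map (fun ω => Y ω ᵥ* A ω) = vecMulConv (P.map Y) (P.map A) := by
  rw [vecMulConv, ← (indepFun_iff_map_prod_eq_prod_map_map hY.aemeasurable hA.aemeasurable).mp hYA,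
    Measure.map_map measurable_vecMul (hY.prodMk hA)]
  rfl

theorem vecMulConv_dirac_one (μ : Measure (Fin d → ℝ)) [SFinite μ] :
    vecMulConv μ (Measure.dirac 1) = μ := by
  rw [vecMulConv, Measure.prod_dirac,
    Measure.map_map measurable_vecMul measurable_prodMk_right]
  simp [Function.comp_def]

theorem vecMulConv_mconv (μ : Measure (Fin d → ℝ)) (κ₁ κ₂ : Measure (Matrix (Fin d) (Fin d) ℝ))
    [SFinite μ] [SFinite κ₁] [SFinite κ₂] :
    vecMulConv μ (κ₁ ∗ₘ κ₂) = vecMulConv (vecMulConv μ κ₁) κ₂ := by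
  have hmul : Measurable fun p : Matrix (Fin d) (Fin d) ℝ × Matrix (Fin d) (Fin d) ℝ =>
      p.1 * p.2 := measurable_mul
  have hL : vecMulConv μ (κ₁ ∗ₘ κ₂)
      = (μ.prod (κ₁.prod κ₂)).map fun p => p.1 ᵥ* (p.2.1 * p.2.2) := by
    have h := map_prod_vecMul (ρ₁ := μ) (ρ₂ := κ₁.prod κ₂) measurable_id hmul
    simp only [id, Measure.map_id] at h
    exact h.symm
  have hR : vecMulConv (vecMulConv μ κ₁) κ₂
      = ((μ.prod κ₁).prod κ₂).map fun q => q.1.1 ᵥ* q.1.2 ᵥ* q.2 := by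
    have h := map_prod_vecMul (ρ₁ := μ.prod κ₁) (ρ₂ := κ₂) measurable_vecMul measurable_id
    simp only [id, Measure.map_id] at h
    exact h.symm
  rw [hL, hR, ← Measure.prodAssoc_prod, Measure.map_map _ MeasurableEquiv.prodAssoc.measurable]
  · simp only [vecMul_vecMul]
    rfl
  · exact measurable_vecMul.comp (measurable_fst.prodMk (hmul.comp measurable_snd))

theorem vecMul_of_const_rows {y : Fin d → ℝ} (hy : y ∈ stdSimplex ℝ (Fin d)) (w : Fin d → ℝ) :
    y ᵥ* Matrix.of (fun _ j => w j) = w := by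
  funext j
  simp [vecMul, dotProduct, ← Finset.sum_mul, hy.2]

end VecMulConv

section LeftProd

variable {Ω : Type*} {d : ℕ}

theorem leftProd_succ_eq_shift_mul (X : ℕ → Ω → Matrix (Fin d) (Fin d) ℝ) (n : ℕ) (ω : Ω) :
    leftProd X (n + 1) ω = leftProd (fun i => X (i + 1)) n ω * X 1 ω := by
  induction n with
  | zero => simp [leftProd]
  | succ n ih =>
    change X (n + 2) ω * leftProd X (n + 1) ω = X (n + 2) ω * leftProd _ n ω * X 1 ω
    rw [ih, mul_assoc]

theorem measurable_leftProd {m : MeasurableSpace Ω} {X : ℕ → Ω → Matrix (Fin d) (Fin d) ℝ}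
    {n : ℕ} (hX : ∀ i ∈ Finset.Icc 1 n, Measurable (X i)) : Measurable (leftProd X n) := by
  induction n with
  | zero => exact measurable_const
  | succ n ih =>
    refine (hX (n + 1) (by simp)).mul (ih fun i hi => hX i ?_)
    simp only [Finset.mem_Icc] at hi ⊢
    omega

variable [MeasurableSpace Ω] {P : Measure Ω} {X : ℕ → Ω → Matrix (Fin d) (Fin d) ℝ}

theorem indepFun_leftProd_shift (hX : ∀ n, Measurable (X n)) (hiid : iIndepFun X P)
    {m s n : ℕ} (hm : m ∉ Finset.Icc (s + 1) (s + n)) :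
    IndepFun (X m) (leftProd (fun i => X (i + s)) n) P := by
  have hindep := indep_iSup_of_disjoint (fun i => (hX i).comap_le) hiid.iIndep
    (S := {m}) (T := Finset.Icc (s + 1) (s + n)) (Set.disjoint_singleton_left.2 hm)
  have hT : ∀ i ∈ Finset.Icc 1 n, Measurable[⨆ j ∈ (Finset.Icc (s + 1) (s + n) : Set ℕ),
      MeasurableSpace.comap (X j) inferInstance] (X (i + s)) := fun i hi =>
    measurable_iff_comap_le.2 (le_biSup (fun j => MeasurableSpace.comap (X j) inferInstance)
      (by simp only [Finset.coe_Icc, Set.mem_Icc, Finset.mem_Icc] at hi ⊢; omega))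
  rw [IndepFun_iff_Indep]
  exact indep_of_indep_of_le hindep
    (le_biSup (fun j => MeasurableSpace.comap (X j) inferInstance) (Set.mem_singleton m))
    (measurable_leftProd hT).comap_le

variable [IsProbabilityMeasure P]

theorem map_leftProd_shift (hX : ∀ n, Measurable (X n)) (hiid : iIndepFun X P)
    (hident : ∀ n, P.map (X n) = P.map (X 0)) (n s : ℕ) :
    P.map (leftProd (fun i => X (i + s)) n) = P.map (leftProd X n) := by
  induction n generalizing s with
  | zero => rfl
  | succ n ih =>
    have hsucc : ∀ s, P.map (leftProd (fun i => X (i + s)) (n + 1))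
        = P.map (X 0) ∗ₘ P.map (leftProd X n) := fun s => by
      rw [← hident (n + 1 + s), ← ih s]
      have hindep := indepFun_leftProd_shift hX hiid (m := n + 1 + s) (s := s) (n := n)
        (by simp only [Finset.mem_Icc]; omega)
      exact hindep.map_mul_eq_map_mconv_map (hX _) (measurable_leftProd fun i _ => hX _)
    exact (hsucc s).trans (hsucc 0).symm

theorem map_leftProd_succ (hX : ∀ n, Measurable (X n)) (hiid : iIndepFun X P)
    (hident : ∀ n, P.map (X n) = P.map (X 0)) (n : ℕ) :
    P.map (leftProd X (n + 1)) = P.map (leftProd X n) ∗ₘ P.map (X 1) := by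
  rw [funext (leftProd_succ_eq_shift_mul X n), ← map_leftProd_shift hX hiid hident n 1]
  exact (indepFun_leftProd_shift hX hiid (m := 1) (by simp)).symm.map_mul_eq_map_mconv_map
    (measurable_leftProd fun i _ => hX _) (hX 1)

end LeftProd

section Limit

variable {Ω : Type*} [MeasurableSpace Ω] {P : Measure Ω} {d : ℕ}
  {X : ℕ → Ω → Matrix (Fin d) (Fin d) ℝ} {W : Ω → Fin d → ℝ}

theorem measurable_vecMul_leftProd (hX : ∀ n, Measurable (X n)) (n : ℕ) :
    Measurable fun p : (Fin d → ℝ) × Ω => p.1 ᵥ* leftProd X n p.2 :=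
  measurable_vecMul.comp (measurable_fst.prodMk
    ((measurable_leftProd fun i _ => hX i).comp measurable_snd))

theorem ae_tendsto_vecMul_leftProd
    (hconv : ∀ᵐ ω ∂P, Tendsto (fun n => leftProd X n ω) atTop (𝓝 (Matrix.of fun _ j => W ω j)))
    {μ : Measure (Fin d → ℝ)} [SFinite μ] (hμ : ∀ᵐ y ∂μ, y ∈ stdSimplex ℝ (Fin d)) :
    ∀ᵐ p ∂μ.prod P, Tendsto (fun n => p.1 ᵥ* leftProd X n p.2) atTop (𝓝 (W p.2)) := by
  filter_upwards [Measure.quasiMeasurePreserving_fst.ae hμ,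
    Measure.quasiMeasurePreserving_snd.ae hconv] with p hy hp
  rw [← vecMul_of_const_rows hy (W p.2)]
  exact ((continuous_const.matrix_vecMul continuous_id).tendsto _).comp hp

variable [IsProbabilityMeasure P]

theorem map_vecMul_leftProd (hX : ∀ n, Measurable (X n)) (μ : Measure (Fin d → ℝ)) [SFinite μ]
    (n : ℕ) :
    (μ.prod P).map (fun p => p.1 ᵥ* leftProd X n p.2) = vecMulConv μ (P.map (leftProd X n)) := by
  simpa using map_prod_vecMul (ρ₁ := μ) (ρ₂ := P) measurable_id
    (measurable_leftProd fun i _ => hX i)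

variable (hX : ∀ n, Measurable (X n)) (hiid : iIndepFun X P)
  (hident : ∀ n, P.map (X n) = P.map (X 0)) (hW : Measurable W)
  (hconv : ∀ᵐ ω ∂P, Tendsto (fun n => leftProd X n ω) atTop (𝓝 (Matrix.of fun _ j => W ω j)))
include hX hiid hident hW hconv

theorem eq_map_of_vecMulConv_eq {μ : Measure (Fin d → ℝ)} [IsProbabilityMeasure μ]
    (hμ : ∀ᵐ y ∂μ, y ∈ stdSimplex ℝ (Fin d)) (hfix : vecMulConv μ (P.map (X 1)) = μ) :
    μ = P.map W := by
  have hfix_leftProd : ∀ n, vecMulConv μ (P.map (leftProd X n)) = μ := by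
    intro n
    induction n with
    | zero => simp [leftProd, Measure.map_const, vecMulConv_dirac_one]
    | succ n ih => rw [map_leftProd_succ hX hiid hident, vecMulConv_mconv, ih, hfix]
  have h := map_eq_map_of_ae_tendsto (μ := μ.prod P) (ν := μ)
    (f := fun n p => p.1 ᵥ* leftProd X n p.2) (g := fun _ => id) (F := fun p => W p.2) (G := id)
    (fun n => (measurable_vecMul_leftProd hX n).aemeasurable)
    (fun _ => aemeasurable_id) (hW.comp measurable_snd).aemeasurable aemeasurable_id
    (ae_tendsto_vecMul_leftProd hconv hμ) (ae_of_all _ fun _ => tendsto_const_nhds)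
    fun n => by rw [map_vecMul_leftProd hX, hfix_leftProd, Measure.map_id]
  rw [map_comp_snd_prod _ hW, Measure.map_id] at h
  exact h.symm

theorem vecMulConv_map_eq_map (hWs : ∀ᵐ ω ∂P, W ω ∈ stdSimplex ℝ (Fin d)) :
    vecMulConv (P.map W) (P.map (X 1)) = P.map W := by
  set μ := P.map W
  have : IsProbabilityMeasure μ := Measure.isProbabilityMeasure_map hW.aemeasurable
  have hμ : ∀ᵐ y ∂μ, y ∈ stdSimplex ℝ (Fin d) :=
    (ae_map_iff hW.aemeasurable (isClosed_stdSimplex ℝ (Fin d)).measurableSet).2 hWs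
  have hR := measurable_vecMul_leftProd hX
  have hlim := ae_tendsto_vecMul_leftProd hconv hμ
  have h := map_eq_map_of_ae_tendsto (μ := (μ.prod P).prod P) (ν := μ.prod P)
    (f := fun n q => (q.1.1 ᵥ* leftProd X n q.1.2) ᵥ* X 1 q.2)
    (g := fun n p => p.1 ᵥ* leftProd X (n + 1) p.2)
    (F := fun q => W q.1.2 ᵥ* X 1 q.2) (G := fun p => W p.2)
    (fun n => (measurable_vecMul.comp (((hR n).comp measurable_fst).prodMk
      ((hX 1).comp measurable_snd))).aemeasurable)
    (fun n => (hR (n + 1)).aemeasurable)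
    (measurable_vecMul.comp (((hW.comp measurable_snd).comp measurable_fst).prodMk
      ((hX 1).comp measurable_snd))).aemeasurable
    (hW.comp measurable_snd).aemeasurable
    (by
      filter_upwards [Measure.quasiMeasurePreserving_fst.ae hlim] with q hq
      exact ((continuous_id.matrix_vecMul continuous_const).tendsto _).comp hq)
    (hlim.mono fun p hp => hp.comp (tendsto_add_atTop_nat 1))
    fun n => by
      rw [map_prod_vecMul (hR n) (hX 1), map_vecMul_leftProd hX,
        map_vecMul_leftProd hX, map_leftProd_succ hX hiid hident, vecMulConv_mconv]
  rwa [map_prod_vecMul (ρ₁ := μ.prod P) (ρ₂ := P) (f := fun p => W p.2)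
    (hW.comp measurable_snd) (hX 1), map_comp_snd_prod _ hW] at h

end Limit

theorem fixed_point_characterization_general
    {Ω : Type*} [MeasureSpace Ω] [IsProbabilityMeasure (ℙ : Measure Ω)]
    {d : ℕ}
    (X : ℕ → Ω → Matrix (Fin d) (Fin d) ℝ)
    (hmeas : ∀ n, Measurable (X n))
    (hiid : iIndepFun X ℙ)
    (hident : ∀ n, Measure.map (X n) ℙ = Measure.map (X 0) ℙ)
    (W : Ω → Fin d → ℝ) (hW : Measurable W)
    (hWsimplex : ∀ᵐ ω ∂ℙ, W ω ∈ stdSimplex ℝ (Fin d))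
    (hconv : ∀ᵐ ω ∂ℙ, Tendsto (fun n => leftProd X n ω) atTop
      (nhds (Matrix.of fun _ j => W ω j)))
    (Y : Ω → Fin d → ℝ) (hY : Measurable Y)
    (hYsimplex : ∀ ω, Y ω ∈ stdSimplex ℝ (Fin d))
    (hYX : IndepFun Y (X 1) ℙ) :
    Measure.map (fun ω j => ∑ i, Y ω i * X 1 ω i j) ℙ = Measure.map Y ℙ ↔
      Measure.map Y ℙ = Measure.map W ℙ := by
  have hYs : ∀ᵐ y ∂(ℙ : Measure Ω).map Y, y ∈ stdSimplex ℝ (Fin d) :=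
    (ae_map_iff hY.aemeasurable (isClosed_stdSimplex ℝ (Fin d)).measurableSet).2
      (ae_of_all _ hYsimplex)
  have := Measure.isProbabilityMeasure_map (μ := ℙ) hY.aemeasurable
  change Measure.map (fun ω => Y ω ᵥ* X 1 ω) ℙ = _ ↔ _
  rw [hYX.map_vecMul_eq_vecMulConv hY (hmeas 1)]
  refine ⟨eq_map_of_vecMulConv_eq hmeas hiid hident hW hconv hYs, fun hYW => ?_⟩
  rw [hYW]
  exact vecMulConv_map_eq_map hmeas hiid hident hW hconv hWsimplex

/-- Fixed-point characterization of the limiting common row `W`: for `Y` a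
random element of the simplex independent of `X(1)`, `Y·X(1) =d Y` iff
`Y =d W`. -/
theorem fixed_point_characterization
    {Ω : Type*} [MeasureSpace Ω] [IsProbabilityMeasure (ℙ : Measure Ω)]
    {d : ℕ} (hd : 0 < d)
    (X : ℕ → Ω → Matrix (Fin d) (Fin d) ℝ)
    (hmeas : ∀ n, Measurable (X n))
    (hiid : iIndepFun X ℙ)
    (hident : ∀ n, Measure.map (X n) ℙ = Measure.map (X 0) ℙ)
    (hstoch : ∀ n ω, (∀ i j, 0 ≤ X n ω i j) ∧ ∀ i, ∑ j, X n ω i j = 1)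
    (hpos : ∃ m, 0 < ℙ {ω | ∀ i j, 0 < leftProd X m ω i j})
    (W : Ω → Fin d → ℝ) (hW : Measurable W)
    (hWsimplex : ∀ᵐ ω ∂ℙ, W ω ∈ stdSimplex ℝ (Fin d))
    (hconv : ∀ᵐ ω ∂ℙ, Tendsto (fun n => leftProd X n ω) atTop
      (nhds (Matrix.of fun _ j => W ω j)))
    (Y : Ω → Fin d → ℝ) (hY : Measurable Y)
    (hYsimplex : ∀ ω, Y ω ∈ stdSimplex ℝ (Fin d))
    (hYX : IndepFun Y (X 1) ℙ) :
    Measure.map (fun ω j => ∑ i, Y ω i * X 1 ω i j) ℙ = Measure.map Y ℙ ↔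
      Measure.map Y ℙ = Measure.map W ℙ :=
  fixed_point_characterization_general X hmeas hiid hident W hW hWsimplex hconv Y hY hYsimplex hYX
end

section
/- Cyclic-shift example: Let U₁, …, U_d be i.i.d. uniform on (0,1), and let X be the d × d stochastic matrix with X_{k,k} = U_k, X_{k,k+1 (mod d)} = 1 − U_k, and all other entries zero. If V = (V₁, …, V_d) has i.i.d. Gamma(2,1) components independent of X, then V·X has the same distribution as V. -/
/-!
Beta–gamma algebra: if `U` is uniform on `(0,1)` and `G ~ Gamma(2, r)` is independent of it, then
`UG` and `(1 - U)G` are independent `Exp(r)` variables (the change of variables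
`(u, v) ↦ (uv, (1 - u)v)` has Jacobian `v`, which is exactly the factor `v` in the Gamma(2)
density), and the sum of two independent `Exp(r)` variables is `Gamma(2, r)`. Hence
`(V·X)_j = U_j V_j + (1 - U_{j-1}) V_{j-1} = A_j + B_{j-1}`, where `A_k = U_k V_k` and
`B_k = (1 - U_k) V_k` are `2(d + 2)` i.i.d. exponentials; shifting the `B`'s keeps them i.i.d.
-/

open MeasureTheory ProbabilityTheory

open Real Set
open scoped ENNReal

instance sigmaFinite_gammaMeasure (a r : ℝ) : SigmaFinite (gammaMeasure a r) :=
  SigmaFinite.withDensity_ofReal _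

instance sigmaFinite_expMeasure (r : ℝ) : SigmaFinite (expMeasure r) :=
  sigmaFinite_gammaMeasure 1 r

theorem map_withDensity_comp {α β : Type*} [MeasurableSpace α] [MeasurableSpace β]
    (μ : Measure α) {g : α → β} (hg : Measurable g) {f : β → ℝ≥0∞}
    (hf : Measurable f) :
    (μ.withDensity (f ∘ g)).map g = (μ.map g).withDensity f := by
  ext s hs
  rw [Measure.map_apply hg hs, withDensity_apply _ (hg hs), withDensity_apply _ hs,
    setLIntegral_map hs hf hg]
  rfl

theorem measurePreserving_comp_perm {ι α : Type*} [Fintype ι] [MeasurableSpace α]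
    (σ : Equiv.Perm ι) (μ : Measure α) [SigmaFinite μ] :
    MeasurePreserving (fun (b : ι → α) i => b (σ i)) (Measure.pi fun _ => μ)
      (Measure.pi fun _ => μ) := by
  convert measurePreserving_piCongrLeft (fun _ : ι => μ) σ.symm using 1
  ext b i
  simp [MeasurableEquiv.piCongrLeft, Equiv.piCongrLeft]

theorem measurePreserving_pi_prod {ι α β γ : Type*} [Fintype ι] [MeasurableSpace α]
    [MeasurableSpace β] [MeasurableSpace γ] {μ : Measure α} {ν : Measure β} {ρ : Measure γ}
    [SigmaFinite μ] [SigmaFinite ν] [SigmaFinite ρ] {f : α × β → γ}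
    (hf : MeasurePreserving f (μ.prod ν) ρ) :
    MeasurePreserving (fun p : (ι → α) × (ι → β) => fun i => f (p.1 i, p.2 i))
      ((Measure.pi fun _ => μ).prod (Measure.pi fun _ => ν)) (Measure.pi fun _ => ρ) :=
  (measurePreserving_pi _ _ fun _ => hf).comp
    (measurePreserving_arrowProdEquivProdArrow α β ι _ _).symm

theorem gammaPDF_two (r x : ℝ) :
    gammaPDF 2 r x = ENNReal.ofReal (if 0 ≤ x then r ^ 2 * x * exp (-(r * x)) else 0) := by
  rw [gammaPDF_eq]
  norm_num [Real.Gamma_two]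

theorem gammaMeasure_two_eq_withDensity (r : ℝ) :
    gammaMeasure 2 r = (volume.restrict (Ioi 0)).withDensity
      fun x => ENNReal.ofReal (r ^ 2 * x * exp (-(r * x))) := by
  rw [gammaMeasure, ← withDensity_indicator measurableSet_Ioi]
  congr 1
  ext x
  rcases lt_trichotomy x 0 with hx | rfl | hx
  · simp [gammaPDF_two, hx.not_ge, hx.not_gt]
  · simp [gammaPDF_two]
  · simp [gammaPDF_two, hx, hx.le]

theorem expMeasure_eq_withDensity (r : ℝ) :
    expMeasure r = volume.withDensity (exponentialPDF r) := rfl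

theorem expMeasure_eq_withDensity_restrict (r : ℝ) :
    expMeasure r =
      (volume.restrict (Ioi 0)).withDensity fun x => ENNReal.ofReal (r * exp (-(r * x))) := by
  rw [Measure.restrict_congr_set Ioi_ae_eq_Ici, ← withDensity_indicator measurableSet_Ici,
    expMeasure_eq_withDensity]
  congr 1
  ext x
  by_cases hx : 0 ≤ x <;> simp [exponentialPDF_eq, hx]

theorem exponentialPDF_lconvolution {r : ℝ} (hr : 0 ≤ r) :
    exponentialPDF r ⋆ₗ exponentialPDF r = gammaPDF 2 r := by
  ext x
  have hintegrand : (fun y => exponentialPDF r y * exponentialPDF r (-y + x)) =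
      (Icc 0 x).indicator fun _ => ENNReal.ofReal (r ^ 2 * exp (-(r * x))) := by
    ext y
    by_cases hy : y ∈ Icc 0 x
    · rw [indicator_of_mem hy, exponentialPDF_of_nonneg hy.1,
        exponentialPDF_of_nonneg (by linarith [hy.2]), ← ENNReal.ofReal_mul (by positivity)]
      congr 1
      rw [show -(r * x) = -(r * y) + -(r * (-y + x)) by ring, Real.exp_add]
      ring
    · rw [indicator_of_notMem hy]
      rcases not_and_or.mp hy with hy | hy
      · rw [exponentialPDF_of_neg (not_le.mp hy), zero_mul]
      · rw [exponentialPDF_of_neg (x := -y + x) (by linarith [not_le.mp hy]), mul_zero]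
  rw [lconvolution_def, hintegrand, lintegral_indicator measurableSet_Icc, setLIntegral_const,
    Real.volume_Icc, sub_zero, gammaPDF_two]
  split_ifs with hx
  · rw [← ENNReal.ofReal_mul (by positivity)]
    congr 1
    ring
  · rw [ENNReal.ofReal_of_nonpos (not_le.mp hx).le, mul_zero, ENNReal.ofReal_zero]

theorem expMeasure_conv_expMeasure {r : ℝ} (hr : 0 ≤ r) :
    expMeasure r ∗ expMeasure r = gammaMeasure 2 r := by
  have hm : Measurable (exponentialPDF r) := (measurable_exponentialPDFReal r).ennreal_ofReal
  rw [expMeasure_eq_withDensity, conv_withDensity_eq_lconvolution hm hm,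
    exponentialPDF_lconvolution hr]
  rfl

theorem measurePreserving_add_expMeasure {r : ℝ} (hr : 0 ≤ r) :
    MeasurePreserving (fun p : ℝ × ℝ => p.1 + p.2) ((expMeasure r).prod (expMeasure r))
      (gammaMeasure 2 r) :=
  ⟨by fun_prop, expMeasure_conv_expMeasure hr⟩

def splitByFraction (p : ℝ × ℝ) : ℝ × ℝ := (p.1 * p.2, (1 - p.1) * p.2)

theorem measurable_splitByFraction : Measurable splitByFraction := by
  unfold splitByFraction; fun_prop

def splitByFractionDeriv (p : ℝ × ℝ) : ℝ × ℝ →L[ℝ] ℝ × ℝ :=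
  (p.1 • ContinuousLinearMap.snd ℝ ℝ ℝ + p.2 • ContinuousLinearMap.fst ℝ ℝ ℝ).prod
    ((1 - p.1) • ContinuousLinearMap.snd ℝ ℝ ℝ + p.2 • (0 - ContinuousLinearMap.fst ℝ ℝ ℝ))

theorem hasFDerivAt_splitByFraction (p : ℝ × ℝ) :
    HasFDerivAt splitByFraction (splitByFractionDeriv p) p :=
  (hasFDerivAt_fst.mul hasFDerivAt_snd).prodMk
    (((hasFDerivAt_const (1 : ℝ) p).sub hasFDerivAt_fst).mul hasFDerivAt_snd)

theorem det_splitByFractionDeriv (p : ℝ × ℝ) : (splitByFractionDeriv p).det = p.2 := by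
  rw [ContinuousLinearMap.det, ← LinearMap.det_toMatrix (Module.Basis.finTwoProd ℝ),
    Matrix.det_fin_two]
  simp [LinearMap.toMatrix_apply, splitByFractionDeriv, mul_sub, mul_comm p.1]

theorem injOn_splitByFraction : InjOn splitByFraction (Ioo 0 1 ×ˢ Ioi 0) := by
  rintro ⟨u, v⟩ ⟨-, hv⟩ ⟨u', v'⟩ - h
  simp only [splitByFraction, Prod.mk.injEq] at h
  have hvv : v = v' := by linarith [h.1, h.2]
  subst hvv
  simp [mul_right_cancel₀ (ne_of_gt hv) h.1]

theorem image_splitByFraction : splitByFraction '' (Ioo 0 1 ×ˢ Ioi 0) = Ioi 0 ×ˢ Ioi 0 := by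
  ext ⟨x, y⟩
  constructor
  · rintro ⟨⟨u, v⟩, ⟨⟨hu0, hu1⟩, hv⟩, h⟩
    simp only [splitByFraction, Prod.mk.injEq] at h
    obtain ⟨rfl, rfl⟩ := h
    exact ⟨mul_pos hu0 hv, mul_pos (sub_pos.mpr hu1) hv⟩
  · rintro ⟨hx, hy⟩
    simp only [mem_Ioi] at hx hy
    refine ⟨(x / (x + y), x + y), ⟨⟨by positivity, ?_⟩, show 0 < x + y by positivity⟩, ?_⟩
    · rw [div_lt_one (by positivity)]
      linarith
    · simp only [splitByFraction, Prod.mk.injEq]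
      constructor
      · field_simp
      · field_simp
        ring

theorem measurePreserving_splitByFraction {r : ℝ} (hr : 0 ≤ r) :
    MeasurePreserving splitByFraction ((volume.restrict (Ioo 0 1)).prod (gammaMeasure 2 r))
      ((expMeasure r).prod (expMeasure r)) := by
  set S := Ioo (0 : ℝ) 1 ×ˢ Ioi (0 : ℝ)
  set H : ℝ × ℝ → ℝ≥0∞ :=
    fun q => ENNReal.ofReal (r * exp (-(r * q.1))) * ENNReal.ofReal (r * exp (-(r * q.2)))
  have hS : MeasurableSet S := measurableSet_Ioo.prod measurableSet_Ioi
  have hH : Measurable H := by fun_prop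
  have hdet : Measurable fun p => ENNReal.ofReal |(splitByFractionDeriv p).det| := by
    simp only [det_splitByFractionDeriv]
    fun_prop
  have hsource : (volume.restrict (Ioo 0 1)).prod (gammaMeasure 2 r) =
      ((volume.restrict S).withDensity
        (fun p => ENNReal.ofReal |(splitByFractionDeriv p).det|)).withDensity
          (H ∘ splitByFraction) := by
    rw [← withDensity_mul _ hdet (hH.comp measurable_splitByFraction),
      gammaMeasure_two_eq_withDensity, prod_withDensity_right (by fun_prop),
      Measure.prod_restrict, ← Measure.volume_eq_prod]
    refine withDensity_congr_ae <| (ae_restrict_iff' hS).2 <|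
      Filter.Eventually.of_forall fun p hp => ?_
    simp only [Pi.mul_apply, Function.comp, det_splitByFractionDeriv, H, splitByFraction]
    rw [abs_of_pos hp.2, ← ENNReal.ofReal_mul (by positivity),
      ← ENNReal.ofReal_mul hp.2.out.le]
    congr 1
    rw [show -(r * p.2) = -(r * (p.1 * p.2)) + -(r * ((1 - p.1) * p.2)) by ring, Real.exp_add]
    ring
  have htarget : (expMeasure r).prod (expMeasure r) =
      (volume.restrict (Ioi 0 ×ˢ Ioi 0)).withDensity H := by
    rw [expMeasure_eq_withDensity_restrict, prod_withDensity (by fun_prop) (by fun_prop),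
      Measure.prod_restrict, ← Measure.volume_eq_prod]
  refine ⟨measurable_splitByFraction, ?_⟩
  rw [hsource, map_withDensity_comp _ measurable_splitByFraction hH,
    map_withDensity_abs_det_fderiv_eq_addHaar volume hS.nullMeasurableSet
      (fun p _ => (hasFDerivAt_splitByFraction p).hasFDerivWithinAt) injOn_splitByFraction,
    image_splitByFraction, htarget]

theorem map_mul_add_one_sub_mul_comp_perm {ι : Type*} [Fintype ι] (σ : Equiv.Perm ι) {r : ℝ}
    (hr : 0 ≤ r) :
    Measure.map
        (fun p : (ι → ℝ) × (ι → ℝ) => fun i => p.1 i * p.2 i + (1 - p.1 (σ i)) * p.2 (σ i))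
        ((Measure.pi fun _ => volume.restrict (Ioo 0 1)).prod
          (Measure.pi fun _ => gammaMeasure 2 r)) =
      Measure.pi fun _ => gammaMeasure 2 r := by
  have split := (measurePreserving_arrowProdEquivProdArrow ℝ ℝ ι _ _).comp
    (measurePreserving_pi_prod (ι := ι) (measurePreserving_splitByFraction hr))
  have shift := (MeasurePreserving.id (Measure.pi fun _ : ι => expMeasure r)).prod
    (measurePreserving_comp_perm σ (expMeasure r))
  have add := measurePreserving_pi_prod (ι := ι) (measurePreserving_add_expMeasure hr)
  convert (add.comp (shift.comp split)).map_eq using 2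
  ext p i
  simp [splitByFraction, MeasurableEquiv.arrowProdEquivProdArrow, Equiv.arrowProdEquivProdArrow]

theorem sum_mul_cyclicBidiagonal {R : Type*} [CommRing R] {d : ℕ} (u v : Fin (d + 2) → R)
    (j : Fin (d + 2)) :
    ∑ k, v k * (if j = k then u k else if j = k + 1 then 1 - u k else 0) =
      u j * v j + (1 - u (j - 1)) * v (j - 1) := by
  have hj : j ≠ j - 1 := fun h => one_ne_zero (sub_eq_self.mp h.symm)
  rw [Fintype.sum_eq_add j (j - 1) hj]
  · simp only [↓reduceIte, hj, sub_add_cancel]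
    ring
  · rintro k ⟨hkj, hkj'⟩
    have hjk : j ≠ k + 1 := fun h => hkj' (eq_sub_of_add_eq h.symm)
    simp [Ne.symm hkj, hjk]

/-- Cyclic-shift example (dimension `d + 2 ≥ 2`): `X` has `X_{k,k} = U_k`,
`X_{k,k+1 (mod d)} = 1-U_k` and zeros elsewhere, with `U_k` i.i.d. uniform on
`(0,1)`. If `V` has i.i.d. Gamma(2,1) components independent of `X`, then
`V·X =d V`. -/
theorem cyclic_shift_gamma_invariance
    {Ω : Type*} [MeasureSpace Ω] [IsProbabilityMeasure (ℙ : Measure Ω)]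
    (d : ℕ)
    (U : Ω → Fin (d + 2) → ℝ) (hU : Measurable U)
    (hUlaw : Measure.map U ℙ
      = Measure.pi (fun _ => (volume : Measure ℝ).restrict (Set.Ioo 0 1)))
    (X : Ω → Fin (d + 2) → Fin (d + 2) → ℝ)
    (hXdef : ∀ ω k j, X ω k j =
      if j = k then U ω k else if j = k + 1 then 1 - U ω k else 0)
    (V : Ω → Fin (d + 2) → ℝ) (hV : Measurable V)
    (hVlaw : Measure.map V ℙ = Measure.pi (fun _ => gammaMeasure 2 1))
    (hVX : IndepFun V X ℙ) :
    Measure.map (fun ω j => ∑ k, V ω k * X ω k j) ℙ = Measure.map V ℙ := by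
  set diag := fun M : Fin (d + 2) → Fin (d + 2) → ℝ => fun k => M k k
  have hdiag : diag ∘ X = U := by
    ext ω k
    simp [diag, hXdef]
  have hUV : IndepFun U V ℙ := by
    simpa [hdiag] using (hVX.comp measurable_id (by fun_prop : Measurable diag)).symm
  have hsum : (fun ω j => ∑ k, V ω k * X ω k j) =
      (fun p : (Fin (d + 2) → ℝ) × (Fin (d + 2) → ℝ) =>
        fun j => p.1 j * p.2 j + (1 - p.1 (j - 1)) * p.2 (j - 1)) ∘ fun ω => (U ω, V ω) := by
    ext ω j
    simp only [hXdef, Function.comp_apply, sum_mul_cyclicBidiagonal]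
  rw [hsum, ← Measure.map_map (by fun_prop) (hU.prodMk hV),
    (indepFun_iff_map_prod_eq_prod_map_map hU.aemeasurable hV.aemeasurable).mp hUV, hUlaw, hVlaw]
  exact map_mul_add_one_sub_mul_comp_perm (Equiv.subRight 1) zero_le_one
end

section
/- The (d−1)-fold left product of i.i.d. copies of the cyclic-shift matrix is entrywise positive with positive probability: if X(1), …, X(d−1) are i.i.d. copies of the matrix X with X_{k,k} = U_k, X_{k,k+1 (mod d)} = 1 − U_k (U_k i.i.d. uniform on (0,1)) and zeros elsewhere, then P(X(d−1)⋯X(1) has all entries positive) > 0. -/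
/-!
Almost surely every `U n k` lies in `(0, 1)`, so every factor is entrywise nonnegative with
positive diagonal and positive cyclic superdiagonal. In a product of `m` such matrices the entry
`(i, i + t)` is positive for every `t ≤ m`: follow a path that stays put `m - t` times and moves
up `t` times. With `d - 1` factors in dimension `d` every offset modulo `d` is covered, so the
product is positive almost surely, and in particular with positive probability.
-/

open MeasureTheory ProbabilityTheory

section CyclicPositivity

variable {R : Type*} [Semiring R] [PartialOrder R] {N : ℕ}

theorem list_prod_apply_nonneg [IsOrderedRing R] {L : List (Matrix (Fin N) (Fin N) R)}
    (hL : ∀ M ∈ L, ∀ i j, 0 ≤ M i j) (i j : Fin N) : 0 ≤ L.prod i j := by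
  induction L generalizing i j with
  | nil => simp only [List.prod_nil, Matrix.one_apply]; split_ifs <;> simp
  | cons M L ih =>
    rw [List.prod_cons, Matrix.mul_apply]
    exact Finset.sum_nonneg fun k _ => mul_nonneg (hL M List.mem_cons_self i k)
      (ih (fun M' hM' => hL M' (List.mem_cons_of_mem _ hM')) k j)

open scoped Fin.NatCast in
theorem list_prod_apply_add_natCast_pos [IsStrictOrderedRing R] [NeZero N]
    {L : List (Matrix (Fin N) (Fin N) R)}
    (hL : ∀ M ∈ L, ∀ i j, 0 ≤ M i j) (hdiag : ∀ M ∈ L, ∀ k, 0 < M k k)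
    (hsucc : ∀ M ∈ L, ∀ k, 0 < M k (k + 1)) {t : ℕ} (ht : t ≤ L.length) (i : Fin N) :
    0 < L.prod i (i + t) := by
  induction L generalizing t i with
  | nil =>
    obtain rfl : t = 0 := by simpa using ht
    simp
  | cons M L ih =>
    have hL' : ∀ M' ∈ L, ∀ i j, 0 ≤ M' i j :=
      fun M' hM' => hL M' (List.mem_cons_of_mem _ hM')
    have ih' : ∀ t ≤ L.length, ∀ i, 0 < L.prod i (i + t) := fun _ ht =>
      ih hL' (fun M' hM' => hdiag M' (List.mem_cons_of_mem _ hM'))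
        (fun M' hM' => hsucc M' (List.mem_cons_of_mem _ hM')) ht
    rw [List.prod_cons, Matrix.mul_apply]
    have hterm : ∀ j, ∀ k ∈ Finset.univ, 0 ≤ M i k * L.prod k j :=
      fun j k _ => mul_nonneg (hL M List.mem_cons_self i k) (list_prod_apply_nonneg hL' _ _)
    cases t with
    | zero =>
      exact Finset.sum_pos' (hterm _)
        ⟨i, Finset.mem_univ _, mul_pos (hdiag M List.mem_cons_self i) (ih' 0 (Nat.zero_le _) i)⟩
    | succ s =>
      have hshift : i + ((s + 1 : ℕ) : Fin N) = (i + 1) + (s : Fin N) := by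
        rw [Nat.cast_succ, add_comm (s : Fin N), add_assoc]
      rw [hshift]
      exact Finset.sum_pos' (hterm _) ⟨i + 1, Finset.mem_univ _,
        mul_pos (hsucc M List.mem_cons_self i) (ih' s (by simpa using ht) (i + 1))⟩

theorem list_prod_apply_pos [IsStrictOrderedRing R] [NeZero N]
    {L : List (Matrix (Fin N) (Fin N) R)}
    (hL : ∀ M ∈ L, ∀ i j, 0 ≤ M i j) (hdiag : ∀ M ∈ L, ∀ k, 0 < M k k)
    (hsucc : ∀ M ∈ L, ∀ k, 0 < M k (k + 1)) (hlen : N ≤ L.length + 1) (i j : Fin N) :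
    0 < L.prod i j := by
  open scoped Fin.NatCast in
  have h := list_prod_apply_add_natCast_pos hL hdiag hsucc (t := (j - i).val) (by omega) i
  rwa [Fin.cast_val_eq_self, add_sub_cancel] at h

end CyclicPositivity

section CyclicShift

variable {R : Type*} [Ring R] {n : ℕ}

def cyclicShift (u : Fin (n + 2) → R) : Matrix (Fin (n + 2)) (Fin (n + 2)) R :=
  Matrix.of fun k j => if j = k then u k else if j = k + 1 then 1 - u k else 0

theorem cyclicShift_apply_self (u : Fin (n + 2) → R) (k : Fin (n + 2)) :
    cyclicShift u k k = u k := by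
  simp [cyclicShift]

theorem cyclicShift_apply_add_one (u : Fin (n + 2) → R) (k : Fin (n + 2)) :
    cyclicShift u k (k + 1) = 1 - u k := by
  simp [cyclicShift]

theorem cyclicShift_nonneg [PartialOrder R] [IsOrderedRing R] {u : Fin (n + 2) → R}
    (hu : ∀ k, u k ∈ Set.Icc 0 1) (i j : Fin (n + 2)) : 0 ≤ cyclicShift u i j := by
  simp only [cyclicShift, Matrix.of_apply]
  split_ifs
  exacts [(hu i).1, sub_nonneg.2 (hu i).2, le_rfl]

end CyclicShift

theorem ae_forall_mem_of_map_eq_pi {Ω ι : Type*} {α : ι → Type*} [MeasurableSpace Ω]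
    [∀ i, MeasurableSpace (α i)] [Fintype ι] {μ : Measure Ω} {f : Ω → ∀ i, α i}
    {ν : ∀ i, Measure (α i)} {s : ∀ i, Set (α i)}
    [∀ i, SigmaFinite ((ν i).restrict (s i))]
    (hf : AEMeasurable f μ) (hs : ∀ i, MeasurableSet (s i))
    (hlaw : μ.map f = Measure.pi fun i => (ν i).restrict (s i)) :
    ∀ᵐ ω ∂μ, ∀ i, f ω i ∈ s i := by
  refine ae_of_ae_map (p := fun x => ∀ i, x i ∈ s i) hf ?_
  rw [hlaw]
  exact ae_all_iff.2 fun i => Measure.tendsto_eval_ae_ae (ae_restrict_mem (hs i))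

theorem cyclic_shift_product_positive_general
    {Ω : Type*} [MeasureSpace Ω] [IsProbabilityMeasure (ℙ : Measure Ω)]
    (d : ℕ)
    (U : Fin (d + 1) → Ω → Fin (d + 2) → ℝ) (hU : ∀ n, Measurable (U n))
    (hUlaw : ∀ n, Measure.map (U n) ℙ
      = Measure.pi (fun _ => (volume : Measure ℝ).restrict (Set.Ioo 0 1)))
    (X : Fin (d + 1) → Ω → Matrix (Fin (d + 2)) (Fin (d + 2)) ℝ)
    (hXdef : ∀ n ω k j, X n ω k j =
      if j = k then U n ω k else if j = k + 1 then 1 - U n ω k else 0) :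
    0 < ℙ {ω | ∀ i j,
      0 < ((List.ofFn fun n => X n ω).reverse.prod) i j} := by
  have hUae : ∀ᵐ ω, ∀ n k, U n ω k ∈ Set.Ioo 0 1 := ae_all_iff.2 fun n =>
    ae_forall_mem_of_map_eq_pi (hU n).aemeasurable (fun _ => measurableSet_Ioo) (hUlaw n)
  refine pos_iff_ne_zero.2 (frequently_ae_iff.1 (hUae.mono fun ω hω => ?_).frequently)
  have hX : ∀ M ∈ (List.ofFn fun n => X n ω).reverse, ∃ n, M = cyclicShift (U n ω) := by
    simp only [List.mem_reverse, List.mem_ofFn]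
    rintro _ ⟨n, rfl⟩
    exact ⟨n, Matrix.ext fun k j => hXdef n ω k j⟩
  refine list_prod_apply_pos (fun M hM => ?_) (fun M hM => ?_) (fun M hM => ?_) (by simp)
  all_goals obtain ⟨n, rfl⟩ := hX M hM
  · exact cyclicShift_nonneg fun k => Set.Ioo_subset_Icc_self (hω n k)
  · exact fun k => by rw [cyclicShift_apply_self]; exact (hω n k).1
  · exact fun k => by rw [cyclicShift_apply_add_one]; exact sub_pos.2 (hω n k).2

/-- For the cyclic-shift matrix in dimension `d + 2`, the `(d+1)`-fold left
product `X(d-1)⋯X(1)` of i.i.d. copies (here the dimension is `d+2` and there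
are `(d+2)-1 = d+1` factors) is entrywise positive with positive
probability. -/
theorem cyclic_shift_product_positive
    {Ω : Type*} [MeasureSpace Ω] [IsProbabilityMeasure (ℙ : Measure Ω)]
    (d : ℕ)
    (U : Fin (d + 1) → Ω → Fin (d + 2) → ℝ) (hU : ∀ n, Measurable (U n))
    (hUlaw : ∀ n, Measure.map (U n) ℙ
      = Measure.pi (fun _ => (volume : Measure ℝ).restrict (Set.Ioo 0 1)))
    (hUindep : iIndepFun U ℙ)
    (X : Fin (d + 1) → Ω → Matrix (Fin (d + 2)) (Fin (d + 2)) ℝ)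
    (hXdef : ∀ n ω k j, X n ω k j =
      if j = k then U n ω k else if j = k + 1 then 1 - U n ω k else 0) :
    0 < ℙ {ω | ∀ i j,
      0 < ((List.ofFn fun n => X n ω).reverse.prod) i j} :=
  cyclic_shift_product_positive_general d U hU hUlaw X hXdef
end
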